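/- arXiv:math/9906204 — 3 statements merged into one kernel-verified Lean document; each statement's English description precedes it below -/
import Mathlib

section
/- Let X be a set of d points in P^2, not contained in a line, and let l be the smallest integer such that X imposes d independent conditions on forms of degree l. If I(X) is generated in degrees ≤ l, then for every point P ∈ X, the ideal I(X − {P}) is also generated in degrees ≤ l; equivalently, the multiplication map S_1 ⊗ I(Z)_l → I(Z)_{l+1} is surjective for Z = X − {P}. -/
open MvPolynomial

noncomputable section

open scoped Classical

variable (k : Type*) [Field k]

/-- Forms of degree `t` in `k[x₀,x₁,x₂]` vanishing at every point of `X ⊆ ℙ²`. -/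
def vpiece (X : Finset (Fin 3 → k)) (t : ℕ) : Submodule k (MvPolynomial (Fin 3) k) :=
  homogeneousSubmodule (Fin 3) k t ⊓
    ⨅ p ∈ X, LinearMap.ker ((aeval p : MvPolynomial (Fin 3) k →ₐ[k] k).toLinearMap)

/-- The Hilbert function of a finite set of points `X ⊆ ℙ²`. -/
def hilb (X : Finset (Fin 3 → k)) (t : ℕ) : ℕ :=
  Module.finrank k (homogeneousSubmodule (Fin 3) k t) - Module.finrank k (vpiece k X t)

/-- The image of the multiplication map `μ_{s,X} : S₁ ⊗ I(X)_s → I(X)_{s+1}`,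
`L ⊗ F ↦ L·F`; its dimension is the rank of `μ_{s,X}`. -/
def mulImg (X : Finset (Fin 3 → k)) (s : ℕ) : Submodule k (MvPolynomial (Fin 3) k) :=
  Submodule.span k
    {G | ∃ L ∈ homogeneousSubmodule (Fin 3) k 1, ∃ F ∈ vpiece k X s, G = L * F}

/-- The (saturated, homogeneous) vanishing ideal of a finite set of points of `ℙ²`,
as the ideal of polynomials vanishing on the affine cone over `X`. -/
def pointsIdeal (X : Finset (Fin 3 → k)) : Ideal (MvPolynomial (Fin 3) k) :=
  ⨅ p ∈ X, ⨅ c : k,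
    RingHom.ker ((aeval (c • p) : MvPolynomial (Fin 3) k →ₐ[k] k).toRingHom)

/-- Degree-`t` graded piece of an ideal `I`. -/
def pieceI (I : Ideal (MvPolynomial (Fin 3) k)) (t : ℕ) :
    Submodule k (MvPolynomial (Fin 3) k) :=
  homogeneousSubmodule (Fin 3) k t ⊓ Submodule.restrictScalars k I

/-- Image of the multiplication map `S₁ ⊗ I_s → I_{s+1}` for an ideal `I`. -/
def mulImgI (I : Ideal (MvPolynomial (Fin 3) k)) (s : ℕ) :
    Submodule k (MvPolynomial (Fin 3) k) :=
  Submodule.span k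
    {G | ∃ L ∈ homogeneousSubmodule (Fin 3) k 1, ∃ F ∈ pieceI k I s, G = L * F}

/-- Hilbert function of the subscheme cut out by an ideal `I`. -/
def hilbI (I : Ideal (MvPolynomial (Fin 3) k)) (t : ℕ) : ℕ :=
  Module.finrank k (homogeneousSubmodule (Fin 3) k t) - Module.finrank k (pieceI k I t)


set_option synthInstance.maxHeartbeats 1000000 in
set_option maxHeartbeats 1000000 in
lemma mem_vpiece_iff {X : Finset (Fin 3 → k)} {t : ℕ} {F : MvPolynomial (Fin 3) k} :
    F ∈ vpiece k X t ↔ F ∈ homogeneousSubmodule (Fin 3) k t ∧ ∀ p ∈ X, aeval p F = 0 := by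
  simp [vpiece, Submodule.mem_inf, Submodule.mem_iInf, LinearMap.mem_ker]

set_option synthInstance.maxHeartbeats 1000000 in
set_option maxHeartbeats 1000000 in
lemma fd_homog (t : ℕ) : FiniteDimensional k (homogeneousSubmodule (Fin 3) k t) := by
  have h : homogeneousSubmodule (Fin 3) k t ≤ restrictTotalDegree (Fin 3) k t := by
    intro p hp
    rw [mem_restrictTotalDegree]
    exact ((mem_homogeneousSubmodule _ _).mp hp).totalDegree_le
  exact Submodule.finiteDimensional_of_le h

set_option synthInstance.maxHeartbeats 1000000 in
set_option maxHeartbeats 1000000 in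
lemma finrank_le_inf_ker_add_one {V : Type*} [AddCommGroup V] [Module k V]
    (N : Submodule k V) [FiniteDimensional k N] (f : V →ₗ[k] k) :
    Module.finrank k N ≤ Module.finrank k (N ⊓ LinearMap.ker f : Submodule k V) + 1 := by
  set g := f.comp N.subtype with hg
  have h1 := (LinearMap.finrank_range_add_finrank_ker g).symm
  have hker : LinearMap.ker g = (N ⊓ LinearMap.ker f).comap N.subtype := by
    ext x
    simp [hg, Submodule.mem_comap, LinearMap.mem_ker, x.2]
  have h2 : Module.finrank k (LinearMap.ker g) =
      Module.finrank k (N ⊓ LinearMap.ker f : Submodule k V) := by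
    rw [hker]; exact (Submodule.comapSubtypeEquivOfLe inf_le_left).finrank_eq
  have h3 : Module.finrank k (LinearMap.range g) ≤ 1 := by
    have := Submodule.finrank_le (LinearMap.range g)
    simpa using this
  omega

set_option synthInstance.maxHeartbeats 1000000 in
set_option maxHeartbeats 1000000 in
lemma vpiece_mono {X Z : Finset (Fin 3 → k)} (h : Z ⊆ X) (s : ℕ) :
    vpiece k X s ≤ vpiece k Z s := by
  intro F hF
  rw [mem_vpiece_iff] at *
  exact ⟨hF.1, fun p hp => hF.2 p (h hp)⟩

set_option synthInstance.maxHeartbeats 1000000 in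
set_option maxHeartbeats 1000000 in
lemma mulImg_mono {X Z : Finset (Fin 3 → k)} (h : Z ⊆ X) (s : ℕ) :
    mulImg k X s ≤ mulImg k Z s := by
  apply Submodule.span_mono
  rintro G ⟨L, hL, F, hF, rfl⟩
  exact ⟨L, hL, F, vpiece_mono k h s hF, rfl⟩

set_option synthInstance.maxHeartbeats 1000000 in
set_option maxHeartbeats 1000000 in
lemma mulImg_le (X : Finset (Fin 3 → k)) (s : ℕ) :
    mulImg k X s ≤ vpiece k X (s + 1) := by
  rw [mulImg, Submodule.span_le]
  rintro G ⟨L, hL, F, hF, rfl⟩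
  rw [SetLike.mem_coe, mem_vpiece_iff]
  obtain ⟨hFh, hFv⟩ := (mem_vpiece_iff k).mp hF
  rw [mem_homogeneousSubmodule] at hL hFh
  constructor
  · rw [mem_homogeneousSubmodule]
    have := hL.mul hFh
    simpa [Nat.add_comm] using this
  · intro p hp
    simp [map_mul, hFv p hp]

set_option synthInstance.maxHeartbeats 1000000 in
set_option maxHeartbeats 1000000 in
lemma vpiece_erase (X : Finset (Fin 3 → k)) (P : Fin 3 → k) (hP : P ∈ X) (t : ℕ) :
    vpiece k X t = vpiece k (X.erase P) t ⊓
      LinearMap.ker ((aeval P : MvPolynomial (Fin 3) k →ₐ[k] k).toLinearMap) := by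
  ext F
  simp only [Submodule.mem_inf, mem_vpiece_iff, LinearMap.mem_ker, AlgHom.toLinearMap_apply]
  constructor
  · rintro ⟨h1, h2⟩
    exact ⟨⟨h1, fun p hp => h2 p (Finset.mem_of_mem_erase hp)⟩, h2 P hP⟩
  · rintro ⟨⟨h1, h2⟩, h3⟩
    refine ⟨h1, fun p hp => ?_⟩
    by_cases hpP : p = P
    · rw [hpP]; exact h3
    · exact h2 p (Finset.mem_erase.mpr ⟨hpP, hp⟩)

set_option synthInstance.maxHeartbeats 1000000 in
set_option maxHeartbeats 1000000 in
/-- If `X` imposes independent conditions in degree `l`, there is a homogeneous form of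
degree `l` vanishing on `X \ {P}` but not at `P`. -/
lemma exists_separating (d l : ℕ) (X : Finset (Fin 3 → k)) (hcard : X.card = d)
    (hl : hilb k X l = d) (P : Fin 3 → k) (hP : P ∈ X) :
    ∃ F ∈ vpiece k (X.erase P) l, aeval P F = (1 : k) := by
  haveI := fd_homog k l
  set S := homogeneousSubmodule (Fin 3) k l with hS
  let E : S →ₗ[k] (↥X → k) :=
    LinearMap.pi fun p => ((aeval (p : Fin 3 → k) :
      MvPolynomial (Fin 3) k →ₐ[k] k).toLinearMap).comp S.subtype
  have hE : ∀ (x : S) (p : ↥X), E x p = aeval (p : Fin 3 → k) (x : MvPolynomial (Fin 3) k) := by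
    intro x p; rfl
  have hker : LinearMap.ker E = (vpiece k X l).comap S.subtype := by
    ext x
    simp only [LinearMap.mem_ker, Submodule.mem_comap, mem_vpiece_iff, funext_iff]
    constructor
    · intro h
      refine ⟨x.2, fun p hp => ?_⟩
      simpa [hE] using h ⟨p, hp⟩
    · intro h p
      simpa [hE] using h.2 p p.2
  have hkr : Module.finrank k (LinearMap.ker E) = Module.finrank k (vpiece k X l) := by
    rw [hker]
    exact (Submodule.comapSubtypeEquivOfLe (inf_le_left : vpiece k X l ≤ S)).finrank_eq
  have hrn := LinearMap.finrank_range_add_finrank_ker E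
  rw [hkr] at hrn
  rw [hilb, ← hS] at hl
  have hpi : Module.finrank k (↥X → k) = d := by
    rw [Module.finrank_pi, Fintype.card_coe, hcard]
  have hrange : Module.finrank k (LinearMap.range E) = Module.finrank k (↥X → k) := by
    rw [hpi]; omega
  have htop : LinearMap.range E = ⊤ := Submodule.eq_top_of_finrank_eq hrange
  obtain ⟨F, hF⟩ := LinearMap.range_eq_top.mp htop
    (fun q : ↥X => if (q : Fin 3 → k) = P then (1 : k) else 0)
  refine ⟨(F : MvPolynomial (Fin 3) k), ?_, ?_⟩
  · rw [mem_vpiece_iff]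
    refine ⟨F.2, fun q hq => ?_⟩
    have hq' : q ∈ X := Finset.mem_of_mem_erase hq
    have := congrFun hF ⟨q, hq'⟩
    rw [hE] at this
    simpa [Finset.ne_of_mem_erase hq] using this
  · have := congrFun hF ⟨P, hP⟩
    rw [hE] at this
    simpa using this

/-- Let `X` be a set of `d` points of `ℙ²`, not contained in a line, and
let `l` be the smallest integer such that `X` imposes `d` independent conditions on forms
of degree `l`.  If `I(X)` is generated in degrees `≤ l` (i.e. `μ_{l,X}` is surjective),
then for every `P ∈ X` the multiplication map `μ_{l,Z} : S₁ ⊗ I(Z)_l → I(Z)_{l+1}` is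
surjective for `Z = X − {P}`, i.e. `I(Z)` is also generated in degrees `≤ l`. -/
theorem case1_subset_generated [IsAlgClosed k] (d l : ℕ)
    (X : Finset (Fin 3 → k))
    (hX0 : ∀ p ∈ X, p ≠ 0)
    (hXdist : ∀ p ∈ X, ∀ q ∈ X, p ≠ q → ∀ c : k, p ≠ c • q)
    (hcard : X.card = d)
    (hline : ¬ ∃ L ∈ homogeneousSubmodule (Fin 3) k 1, L ≠ 0 ∧ ∀ p ∈ X, aeval p L = 0)
    (hl : hilb k X l = d) (hlmin : ∀ t < l, hilb k X t ≠ d)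
    (hgen : mulImg k X l = vpiece k X (l + 1)) :
    ∀ P ∈ X, mulImg k (X.erase P) l = vpiece k (X.erase P) (l + 1) := by
  intro P hP
  obtain ⟨F, hFZ, hFP⟩ := exists_separating k d l X hcard hl P hP
  obtain ⟨i, hi⟩ := Function.ne_iff.mp (hX0 P hP)
  have hXi : (MvPolynomial.X i : MvPolynomial (Fin 3) k) ∈ homogeneousSubmodule (Fin 3) k 1 := by
    rw [mem_homogeneousSubmodule]; exact isHomogeneous_X _ _
  have hLF_mem : (MvPolynomial.X i : MvPolynomial (Fin 3) k) * F ∈ mulImg k (X.erase P) l :=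
    Submodule.subset_span ⟨_, hXi, F, hFZ, rfl⟩
  have hMle : mulImg k (X.erase P) l ≤ vpiece k (X.erase P) (l + 1) := mulImg_le k _ l
  have hLF_not : (MvPolynomial.X i : MvPolynomial (Fin 3) k) * F ∉ vpiece k X (l + 1) := by
    intro h
    have h0 := ((mem_vpiece_iff k).mp h).2 P hP
    rw [map_mul, aeval_X, hFP, mul_one] at h0
    exact hi (by simpa using h0)
  have hXle : vpiece k X (l + 1) ≤ mulImg k (X.erase P) l := by
    rw [← hgen]; exact mulImg_mono k (Finset.erase_subset _ _) l
  haveI := fd_homog k (l + 1)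
  haveI : FiniteDimensional k (vpiece k (X.erase P) (l + 1)) :=
    Submodule.finiteDimensional_of_le
      (inf_le_left : vpiece k (X.erase P) (l + 1) ≤ homogeneousSubmodule (Fin 3) k (l + 1))
  haveI : FiniteDimensional k (mulImg k (X.erase P) l) :=
    Submodule.finiteDimensional_of_le hMle
  have hlt : vpiece k X (l + 1) < mulImg k (X.erase P) l :=
    lt_of_le_of_ne hXle (by intro h; rw [h] at hLF_not; exact hLF_not hLF_mem)
  have h1 : Module.finrank k (vpiece k X (l + 1)) <
      Module.finrank k (mulImg k (X.erase P) l) :=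
    Submodule.finrank_lt_finrank_of_lt hlt
  have h2 : Module.finrank k (vpiece k (X.erase P) (l + 1)) ≤
      Module.finrank k (vpiece k X (l + 1)) + 1 := by
    have h := finrank_le_inf_ker_add_one k (vpiece k (X.erase P) (l + 1))
      ((aeval P : MvPolynomial (Fin 3) k →ₐ[k] k).toLinearMap)
    rwa [← vpiece_erase k X P hP (l + 1)] at h
  exact Submodule.eq_of_le_of_finrank_le hMle (by omega)

end
end

section
/- Let X be a set of d points in P^2 such that I(X) has exactly two minimal generators in degree l+1, where l is minimal with h_X(l) = d. Suppose the forms of degree l in I(X) have a greatest common divisor F of degree k ≥ 1. Then k ≤ 2. -/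
open MvPolynomial

noncomputable section

open scoped Classical

variable (k : Type*) [Field k]

/-! ### Auxiliary results -/

section Aux

variable {k}

/-- Monomial exponents of degree `n` correspond to `Sym (Fin 3) n`. -/
def degreeEquivSym (n : ℕ) : {d : Fin 3 →₀ ℕ // d.degree = n} ≃ Sym (Fin 3) n where
  toFun d := ⟨Finsupp.toMultiset d.1, by
    rw [Finsupp.card_toMultiset]
    simpa [Finsupp.degree_apply, Finsupp.sum] using d.2⟩
  invFun m := ⟨Multiset.toFinsupp m.1, by
    have h : Finsupp.toMultiset (Multiset.toFinsupp m.1) = m.1 :=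
      Multiset.toFinsupp_toMultiset m.1
    have hc := Finsupp.card_toMultiset (Multiset.toFinsupp m.1)
    rw [h] at hc
    have hm := m.2
    simp only [Finsupp.degree, id_eq] at *
    exact hc.symm.trans hm⟩
  left_inv d := by
    ext1
    exact Finsupp.toMultiset_toFinsupp d.1
  right_inv m := by
    ext1
    exact Multiset.toFinsupp_toMultiset m.1

instance degFintype (n : ℕ) : Fintype {d : Fin 3 →₀ ℕ // d.degree = n} :=
  Fintype.ofEquiv _ (degreeEquivSym n).symm

instance degFintype' (n : ℕ) : Fintype ↥{d : Fin 3 →₀ ℕ | d.degree = n} := degFintype n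

lemma card_deg (n : ℕ) : Fintype.card {d : Fin 3 →₀ ℕ // d.degree = n} = (n + 2).choose 2 := by
  rw [Fintype.card_congr (degreeEquivSym n), Sym.card_sym_eq_multichoose, Fintype.card_fin,
    Nat.multichoose_eq]
  have h2 : 2 ≤ n + 2 := by omega
  have := Nat.choose_symm h2
  simp only [Nat.add_sub_cancel] at this ⊢
  rw [show 3 + n - 1 = n + 2 by omega, ← this]

instance finDimHomSub (n : ℕ) : FiniteDimensional k (homogeneousSubmodule (Fin 3) k n) := by
  rw [homogeneousSubmodule_eq_finsupp_supported]
  exact Module.Finite.of_basis (basisRestrictSupport k _)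

lemma finrank_homSub (n : ℕ) :
    Module.finrank k (homogeneousSubmodule (Fin 3) k n) = (n + 2).choose 2 := by
  have h : homogeneousSubmodule (Fin 3) k n
      = restrictSupport k {d : Fin 3 →₀ ℕ | d.degree = n} :=
    homogeneousSubmodule_eq_finsupp_supported _ _ n
  rw [h, Module.finrank_eq_card_basis (basisRestrictSupport k {d : Fin 3 →₀ ℕ | d.degree = n})]
  exact card_deg n

lemma finrank_homSub_succ (n : ℕ) :
    Module.finrank k (homogeneousSubmodule (Fin 3) k (n + 1))
      = Module.finrank k (homogeneousSubmodule (Fin 3) k n) + (n + 2) := by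
  rw [finrank_homSub, finrank_homSub, Nat.choose_two_right, Nat.choose_two_right,
    show n + 1 + 2 = (n + 2) + 1 from rfl, Nat.triangle_succ]

lemma mem_vpiece {X : Finset (Fin 3 → k)} {t : ℕ} {G : MvPolynomial (Fin 3) k} :
    G ∈ vpiece k X t ↔
      G ∈ homogeneousSubmodule (Fin 3) k t ∧ ∀ p ∈ X, aeval p G = 0 := by
  simp [vpiece, Submodule.mem_inf, Submodule.mem_iInf, LinearMap.mem_ker]

lemma vpiece_le (X : Finset (Fin 3 → k)) (t : ℕ) :
    vpiece k X t ≤ homogeneousSubmodule (Fin 3) k t := inf_le_left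

instance (X : Finset (Fin 3 → k)) (t : ℕ) : FiniteDimensional k (vpiece k X t) :=
  Submodule.finiteDimensional_of_le (vpiece_le X t)

/-- `h_X(t) ≤ |X|`: the codimension of `vpiece` in `S_t` is at most the number of points. -/
lemma finrank_homSub_le (X : Finset (Fin 3 → k)) (t : ℕ) :
    Module.finrank k (homogeneousSubmodule (Fin 3) k t) ≤
      Module.finrank k (vpiece k X t) + X.card := by
  classical
  set A := homogeneousSubmodule (Fin 3) k t
  let Φ : A →ₗ[k] (↥X → k) :=
    { toFun := fun G p => aeval (p : Fin 3 → k) (G : MvPolynomial (Fin 3) k)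
      map_add' := by intro a b; ext p; simp
      map_smul' := by intro c a; ext p; simp }
  have hker : LinearMap.ker Φ = (vpiece k X t).comap A.subtype := by
    ext G
    simp only [LinearMap.mem_ker, Submodule.mem_comap, Submodule.coe_subtype, mem_vpiece]
    constructor
    · intro h
      exact ⟨G.2, fun p hp => congrFun h ⟨p, hp⟩⟩
    · intro h
      funext p
      exact h.2 p p.2
  have h1 := LinearMap.finrank_range_add_finrank_ker Φ
  have h2 : Module.finrank k (LinearMap.ker Φ) = Module.finrank k (vpiece k X t) := by
    rw [hker]
    exact LinearEquiv.finrank_eq (Submodule.comapSubtypeEquivOfLe (vpiece_le X t))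
  have h3 : Module.finrank k (LinearMap.range Φ) ≤ X.card := by
    have := Submodule.finrank_le (LinearMap.range Φ)
    rwa [Module.finrank_pi, Fintype.card_coe] at this
  omega

lemma hom_mul_component {F H : MvPolynomial (Fin 3) k} {a : ℕ} (hF : F.IsHomogeneous a) (j : ℕ) :
    homogeneousComponent (a + j) (F * H) = F * homogeneousComponent j H := by
  have hterm : ∀ i, homogeneousComponent (a + j) (F * homogeneousComponent i H)
      = if a + j = a + i then F * homogeneousComponent i H else 0 := fun i =>
    homogeneousComponent_of_mem (hF.mul (homogeneousComponent_isHomogeneous i H))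
  conv_lhs => rw [← sum_homogeneousComponent H, Finset.mul_sum, map_sum]
  rw [Finset.sum_congr rfl (fun i _ => hterm i)]
  simp only [add_right_inj]
  rw [Finset.sum_ite_eq]
  split_ifs with hj
  · rfl
  · rw [homogeneousComponent_eq_zero, mul_zero]
    simp only [Finset.mem_range, not_lt] at hj
    omega

lemma exists_component_ne_zero {H : MvPolynomial (Fin 3) k} (hH : H ≠ 0) :
    ∃ j, homogeneousComponent j H ≠ 0 := by
  by_contra h
  push_neg at h
  apply hH
  rw [← sum_homogeneousComponent H]
  exact Finset.sum_eq_zero fun i _ => h i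

lemma eq_single_component {H : MvPolynomial (Fin 3) k} {m : ℕ}
    (h : ∀ j, j ≠ m → homogeneousComponent j H = 0) : H.IsHomogeneous m := by
  have hH : H = ∑ i ∈ Finset.range (H.totalDegree + 1), homogeneousComponent i H :=
    (sum_homogeneousComponent H).symm
  rw [Finset.sum_eq_single m (fun j _ hj => h j hj)
    (fun hm => homogeneousComponent_eq_zero _ H
      (by simp only [Finset.mem_range, not_lt] at hm; omega))] at hH
  rw [hH]
  exact homogeneousComponent_isHomogeneous m H

/-- A nonzero cofactor of a homogeneous polynomial inside a homogeneous polynomial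
is homogeneous of the difference degree. -/
lemma quotient_isHomogeneous {F H : MvPolynomial (Fin 3) k} {a n : ℕ}
    (hF : F.IsHomogeneous a) (hF0 : F ≠ 0)
    (hFH : (F * H).IsHomogeneous n) (hH0 : H ≠ 0) :
    a ≤ n ∧ H.IsHomogeneous (n - a) := by
  have key : ∀ j, a + j ≠ n → homogeneousComponent j H = 0 := by
    intro j hj
    have h1 := hom_mul_component hF (H := H) j
    rw [homogeneousComponent_of_mem hFH, if_neg hj] at h1
    rcases mul_eq_zero.mp h1.symm with h | h
    · exact absurd h hF0
    · exact h
  obtain ⟨j₀, hj₀⟩ := exists_component_ne_zero hH0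
  have han : a + j₀ = n := by
    by_contra hc
    exact hj₀ (key j₀ hc)
  exact ⟨by omega, eq_single_component fun j hj => key j (by omega)⟩

/-- Over an infinite field there is a linear form non-vanishing at finitely many
nonzero points. -/
lemma exists_linear_form [Infinite k] (Y : Finset (Fin 3 → k)) (hY0 : ∀ p ∈ Y, p ≠ 0) :
    ∃ ℓ : MvPolynomial (Fin 3) k, ℓ.IsHomogeneous 1 ∧ ∀ p ∈ Y, aeval p ℓ ≠ 0 := by
  classical
  set Q : Polynomial k :=
    ∏ p ∈ Y, (Polynomial.C (p 0) + Polynomial.C (p 1) * Polynomial.X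
      + Polynomial.C (p 2) * Polynomial.X ^ 2) with hQ
  have hfac : ∀ p ∈ Y, (Polynomial.C (p 0) + Polynomial.C (p 1) * Polynomial.X
      + Polynomial.C (p 2) * Polynomial.X ^ 2) ≠ 0 := by
    intro p hp hzero
    apply hY0 p hp
    have h0 := congrArg (Polynomial.coeff · 0) hzero
    have h1 := congrArg (Polynomial.coeff · 1) hzero
    have h2 := congrArg (Polynomial.coeff · 2) hzero
    simp [Polynomial.coeff_add, Polynomial.coeff_C, Polynomial.coeff_C_mul,
      Polynomial.coeff_X, Polynomial.coeff_X_pow] at h0 h1 h2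
    funext i
    fin_cases i <;> simp [h0, h1, h2]
  have hQ0 : Q ≠ 0 := Finset.prod_ne_zero_iff.mpr hfac
  have hroots : {x : k | Polynomial.IsRoot Q x}.Finite := Polynomial.finite_setOf_isRoot hQ0
  obtain ⟨a, ha⟩ := hroots.infinite_compl.nonempty
  simp only [Set.mem_compl_iff, Set.mem_setOf_eq, Polynomial.IsRoot] at ha
  refine ⟨X 0 + C a * X 1 + C (a * a) * X 2, ?_, ?_⟩
  · exact ((isHomogeneous_X k 0).add ((isHomogeneous_X k 1).C_mul a)).add
      ((isHomogeneous_X k 2).C_mul (a * a))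
  · intro p hp hev
    apply ha
    rw [hQ, Polynomial.eval_prod]
    refine Finset.prod_eq_zero hp ?_
    simp only [Polynomial.eval_add, Polynomial.eval_mul, Polynomial.eval_C,
      Polynomial.eval_X, Polynomial.eval_pow]
    simp only [map_add, map_mul, aeval_X, algHom_C, algebraMap_eq] at hev
    simp only [Algebra.algebraMap_self_apply] at hev
    linear_combination hev

/-- One-step monotonicity of the Hilbert function, in additive form. -/
lemma hilb_mono_step [Infinite k] (Y : Finset (Fin 3 → k)) (hY0 : ∀ p ∈ Y, p ≠ 0) (m : ℕ) :
    Module.finrank k (homogeneousSubmodule (Fin 3) k m) +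
      Module.finrank k (vpiece k Y (m + 1)) ≤
    Module.finrank k (homogeneousSubmodule (Fin 3) k (m + 1)) +
      Module.finrank k (vpiece k Y m) := by
  obtain ⟨ℓ, hℓ, hℓne⟩ := exists_linear_form Y hY0
  set A := homogeneousSubmodule (Fin 3) k m with hA
  set B := homogeneousSubmodule (Fin 3) k (m + 1) with hB
  set VB := (vpiece k Y (m + 1)).comap B.subtype with hVB
  let mulℓ : A →ₗ[k] B :=
    { toFun := fun H => ⟨ℓ * H.1, by
        have := hℓ.mul ((mem_homogeneousSubmodule m H.1).mp H.2)
        rw [add_comm] at this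
        exact this⟩
      map_add' := by intro x y; ext; simp [mul_add]
      map_smul' := by intro c x; ext; simp [mul_smul_comm] }
  let ψ : A →ₗ[k] (B ⧸ VB) := (VB.mkQ).comp mulℓ
  have hker : LinearMap.ker ψ = (vpiece k Y m).comap A.subtype := by
    ext H
    simp only [ψ, LinearMap.mem_ker, LinearMap.comp_apply, Submodule.mkQ_apply,
      Submodule.Quotient.mk_eq_zero, Submodule.mem_comap, Submodule.coe_subtype, hVB]
    constructor
    · intro h
      rw [mem_vpiece] at h ⊢
      refine ⟨H.2, fun p hp => ?_⟩
      have := h.2 p hp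
      simp only [mulℓ, LinearMap.coe_mk, AddHom.coe_mk, map_mul] at this
      rcases mul_eq_zero.mp this with h' | h'
      · exact absurd h' (hℓne p hp)
      · exact h'
    · intro h
      rw [mem_vpiece] at h ⊢
      constructor
      · exact (mulℓ H).2
      · intro p hp
        simp only [mulℓ, LinearMap.coe_mk, AddHom.coe_mk, map_mul, h.2 p hp, mul_zero]
  have h1 := LinearMap.finrank_range_add_finrank_ker ψ
  have h2 : Module.finrank k (LinearMap.ker ψ) = Module.finrank k (vpiece k Y m) := by
    rw [hker]
    exact LinearEquiv.finrank_eq (Submodule.comapSubtypeEquivOfLe (vpiece_le Y m))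
  have h3 : Module.finrank k VB = Module.finrank k (vpiece k Y (m + 1)) :=
    LinearEquiv.finrank_eq (Submodule.comapSubtypeEquivOfLe (vpiece_le Y (m + 1)))
  have h4 : Module.finrank k (LinearMap.range ψ) ≤ Module.finrank k (B ⧸ VB) :=
    Submodule.finrank_le _
  have h5 := Submodule.finrank_quotient_add_finrank VB
  omega

end Aux

/-- (Claim 5.2.)  Suppose `I(X)` has exactly two minimal generators in
degree `l+1` (`l` minimal with `h_X(l) = d`) and the forms of degree `l` in `I(X)` have a
greatest common divisor `F` of degree `κ ≥ 1`.  Then `κ ≤ 2`. -/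
theorem gcd_degree_le_two [IsAlgClosed k] (d l κ : ℕ)
    (X : Finset (Fin 3 → k))
    (hX0 : ∀ p ∈ X, p ≠ 0)
    (hXdist : ∀ p ∈ X, ∀ q ∈ X, p ≠ q → ∀ c : k, p ≠ c • q)
    (hcard : X.card = d)
    (hl : hilb k X l = d) (hlmin : ∀ t < l, hilb k X t ≠ d)
    (htwo : Module.finrank k (vpiece k X (l + 1)) =
      Module.finrank k (mulImg k X l) + 2)
    (F : MvPolynomial (Fin 3) k) (hF : F ∈ homogeneousSubmodule (Fin 3) k κ)
    (hF0 : F ≠ 0) (hκ : 1 ≤ κ)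
    (hdvd : ∀ G ∈ vpiece k X l, F ∣ G)
    (hgcd : ∀ (κ' : ℕ) (F' : MvPolynomial (Fin 3) k),
      F' ∈ homogeneousSubmodule (Fin 3) k κ' → F' ≠ 0 →
        (∀ G ∈ vpiece k X l, F' ∣ G) → κ' ≤ κ) :
    κ ≤ 2 := by
  classical
  have hFhom : F.IsHomogeneous κ := (mem_homogeneousSubmodule κ F).mp hF
  -- Step 0 : `I(X)_l ≠ 0`, hence `κ ≤ l`.
  have hVne : vpiece k X l ≠ ⊥ := by
    intro hbot
    have hx : ((MvPolynomial.X 0 : MvPolynomial (Fin 3) k) ^ (κ + 1)) ∈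
        homogeneousSubmodule (Fin 3) k (κ + 1) := by
      have := (isHomogeneous_X k (0 : Fin 3)).pow (κ + 1)
      rwa [one_mul] at this
    have := hgcd (κ + 1) _ hx (pow_ne_zero _ (MvPolynomial.X_ne_zero 0)) (fun G hG => by
      rw [hbot, Submodule.mem_bot] at hG
      rw [hG]; exact dvd_zero _)
    omega
  obtain ⟨G₀, hG₀V, hG₀⟩ := (Submodule.ne_bot_iff _).mp hVne
  obtain ⟨H₀, hH₀⟩ := hdvd G₀ hG₀V
  have hH₀0 : H₀ ≠ 0 := by
    rintro rfl
    rw [mul_zero] at hH₀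
    exact hG₀ hH₀
  have hκl : κ ≤ l := by
    have hGhom : (F * H₀).IsHomogeneous l := by
      rw [← hH₀]
      exact (mem_homogeneousSubmodule l G₀).mp (vpiece_le X l hG₀V)
    exact (quotient_isHomogeneous hFhom hF0 hGhom hH₀0).1
  set m := l - κ with hm
  have hκm : κ + m = l := by omega
  -- The residual point set: points of `X` not on `F`.
  set Y := X.filter (fun p => aeval p F ≠ 0) with hY
  have hY0 : ∀ p ∈ Y, p ≠ 0 := fun p hp => hX0 p (Finset.mem_filter.mp hp).1
  -- The residual linear system `W` with `F·W = I(X)_l`.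
  set W : Submodule k (MvPolynomial (Fin 3) k) :=
    homogeneousSubmodule (Fin 3) k m ⊓ (vpiece k X l).comap (LinearMap.mulLeft k F) with hW
  have hmemW : ∀ H, H ∈ W ↔ H ∈ homogeneousSubmodule (Fin 3) k m ∧
      F * H ∈ vpiece k X l := by
    intro H
    rw [hW, Submodule.mem_inf, Submodule.mem_comap, LinearMap.mulLeft_apply]
  -- Every element of `I(X)_l` factors as `F·H` with `H ∈ W`.
  have hWfac : ∀ G ∈ vpiece k X l, ∃ H ∈ W, G = F * H := by
    intro G hG
    obtain ⟨H, hGH⟩ := hdvd G hG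
    refine ⟨H, ?_, hGH⟩
    rw [hmemW]
    refine ⟨?_, by rw [← hGH]; exact hG⟩
    by_cases hH : H = 0
    · rw [hH]; exact Submodule.zero_mem _
    · have hGhom : (F * H).IsHomogeneous l := by
        rw [← hGH]
        exact (mem_homogeneousSubmodule l G).mp (vpiece_le X l hG)
      exact (quotient_isHomogeneous hFhom hF0 hGhom hH).2
  -- `W` is exactly the degree-`m` piece of the ideal of `Y`.
  have hWY : W = vpiece k Y m := by
    ext H
    constructor
    · intro hHW
      obtain ⟨hhom, hV⟩ := (hmemW H).mp hHW
      refine mem_vpiece.mpr ⟨hhom, fun p hp => ?_⟩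
      obtain ⟨hpX, hpF⟩ := Finset.mem_filter.mp hp
      have := (mem_vpiece.mp hV).2 p hpX
      rw [map_mul] at this
      rcases mul_eq_zero.mp this with h' | h'
      · exact absurd h' hpF
      · exact h'
    · intro hHY
      obtain ⟨hhom, hvan⟩ := mem_vpiece.mp hHY
      refine (hmemW H).mpr ⟨hhom, mem_vpiece.mpr ⟨?_, fun p hp => ?_⟩⟩
      · have := hFhom.mul ((mem_homogeneousSubmodule m H).mp hhom)
        rwa [hκm] at this
      · rw [map_mul]
        by_cases hpF : aeval p F = 0
        · rw [hpF, zero_mul]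
        · rw [hvan p (Finset.mem_filter.mpr ⟨hp, hpF⟩), mul_zero]
  -- `W ≃ I(X)_l` via multiplication by `F`.
  have hrankW : Module.finrank k W = Module.finrank k (vpiece k X l) := by
    have hres : ∀ x ∈ W, (LinearMap.mulLeft k F) x ∈ vpiece k X l := by
      intro x hx
      rw [LinearMap.mulLeft_apply]
      exact ((hmemW x).mp hx).2
    let f : W →ₗ[k] vpiece k X l := (LinearMap.mulLeft k F).restrict hres
    have hinj : Function.Injective f := by
      intro x y hxy
      have : F * (x : MvPolynomial (Fin 3) k) = F * (y : MvPolynomial (Fin 3) k) := by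
        have := congrArg (Subtype.val) hxy
        simpa [f, LinearMap.restrict_apply] using this
      exact Subtype.ext (mul_left_cancel₀ hF0 this)
    have hsurj : Function.Surjective f := by
      rintro ⟨G, hG⟩
      obtain ⟨H, hHW, hGH⟩ := hWfac G hG
      refine ⟨⟨H, hHW⟩, ?_⟩
      apply Subtype.ext
      simp [f, LinearMap.restrict_apply, hGH]
    exact LinearEquiv.finrank_eq (LinearEquiv.ofBijective f ⟨hinj, hsurj⟩)
  -- The span of `S₁·W`.
  set T : Submodule k (MvPolynomial (Fin 3) k) :=
    Submodule.span k
      {G | ∃ L ∈ homogeneousSubmodule (Fin 3) k 1, ∃ H ∈ W, G = L * H} with hT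
  -- `mulImg = F · T`, so they have the same dimension.
  have hmap : mulImg k X l = Submodule.map (LinearMap.mulLeft k F) T := by
    rw [hT, Submodule.map_span]
    unfold mulImg
    congr 1
    ext G
    constructor
    · rintro ⟨L, hL, G', hG', rfl⟩
      obtain ⟨H, hHW, hGH⟩ := hWfac G' hG'
      refine ⟨L * H, ⟨L, hL, H, hHW, rfl⟩, ?_⟩
      rw [LinearMap.mulLeft_apply, hGH]
      ring
    · rintro ⟨G'', ⟨L, hL, H, hHW, rfl⟩, rfl⟩
      refine ⟨L, hL, F * H, ((hmemW H).mp hHW).2, ?_⟩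
      rw [LinearMap.mulLeft_apply]
      ring
  have hrankT : Module.finrank k (mulImg k X l) = Module.finrank k T := by
    rw [hmap]
    exact (LinearEquiv.finrank_eq
      (Submodule.equivMapOfInjective _ (mul_right_injective₀ hF0) T)).symm
  -- `S₁·W ⊆ I(Y)_{m+1}`.
  have hTle : T ≤ vpiece k Y (m + 1) := by
    rw [hT, Submodule.span_le]
    rintro G ⟨L, hL, H, hHW, rfl⟩
    have hHY : H ∈ vpiece k Y m := by rw [← hWY]; exact hHW
    obtain ⟨hHhom, hHvan⟩ := mem_vpiece.mp hHY
    refine mem_vpiece.mpr ⟨?_, fun p hp => ?_⟩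
    · have := ((mem_homogeneousSubmodule 1 L).mp hL).mul
        ((mem_homogeneousSubmodule m H).mp hHhom)
      rwa [add_comm] at this
    · rw [map_mul, hHvan p hp, mul_zero]
  -- Dimension bookkeeping.
  have hle := Submodule.finrank_mono (vpiece_le (k := k) X l)
  have hl' : Module.finrank k (homogeneousSubmodule (Fin 3) k l)
      - Module.finrank k (vpiece k X l) = d := hl
  have ht : Module.finrank k (vpiece k X l) + d
      = Module.finrank k (homogeneousSubmodule (Fin 3) k l) := by omega
  have h4 := finrank_homSub_le X (l + 1)
  rw [hcard] at h4
  have hσ : Module.finrank k T ≤ Module.finrank k (vpiece k Y (m + 1)) :=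
    Submodule.finrank_mono hTle
  have hmono := hilb_mono_step Y hY0 m
  have hWrank : Module.finrank k (vpiece k Y m) = Module.finrank k (vpiece k X l) := by
    rw [← hWY]; exact hrankW
  have hd1 := finrank_homSub_succ (k := k) l
  have hd2 := finrank_homSub_succ (k := k) m
  have hDlm : Module.finrank k (homogeneousSubmodule (Fin 3) k m)
      ≤ Module.finrank k (homogeneousSubmodule (Fin 3) k l) := by
    rw [finrank_homSub, finrank_homSub]
    exact Nat.choose_le_choose 2 (by omega)
  omega

end
end

section
/- Let X_2 be a set of points in P^2 whose ideal I(X_2) has exactly one minimal generator in degree l (the maximal degree of a minimal generator), let F be a linear form not vanishing at any point of X_2, let G' ∈ I(X_2)_l be a form such that F and G' form a regular sequence, and let Z be the scheme defined by I(Z) = F·I(X_2) + (G'). Then I(Z) has a minimal generator in degree l+1 if and only if G' is not a minimal generator of I(X_2). -/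
open MvPolynomial

noncomputable section

open scoped Classical

variable (k : Type*) [Field k]

/-! ### Auxiliary lemmas -/

variable {k}


lemma aux_degree_add (u v : Fin 3 →₀ ℕ) : (u + v).degree = u.degree + v.degree := by
  simp [Finsupp.degree_eq_weight_one, map_add]

lemma aux_degree_single (i : Fin 3) : (Finsupp.single i (1:ℕ)).degree = 1 := by
  exact Finsupp.degree_single i 1

lemma aux_single_of_degree_one {u : Fin 3 →₀ ℕ} (h : u.degree = 1) :
    ∃ j, u = Finsupp.single j 1 := by
  have hu0 : u ≠ 0 := by
    intro h0; rw [h0] at h; simp at h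
  obtain ⟨j, hj⟩ := Finsupp.ne_iff.mp hu0
  simp only [Finsupp.coe_zero, Pi.zero_apply] at hj
  refine ⟨j, ?_⟩
  have hj1 : 1 ≤ u j := Nat.one_le_iff_ne_zero.mpr hj
  have hle : u j ≤ u.degree := Finsupp.le_degree j u
  have huj : u j = 1 := le_antisymm (h ▸ hle) hj1
  ext i
  rcases eq_or_ne i j with rfl | hij
  · simp [huj]
  · simp only [Finsupp.single_apply, if_neg (Ne.symm hij)]
    by_contra hne
    have hi1 : 1 ≤ u i := Nat.one_le_iff_ne_zero.mpr hne
    have : 2 ≤ u.degree := by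
      have hsub : ({i, j} : Finset (Fin 3)) ⊆ u.support := by
        intro x hx
        simp only [Finset.mem_insert, Finset.mem_singleton] at hx
        rcases hx with rfl | rfl <;> simp [Finsupp.mem_support_iff, hne, hj]
      calc 2 ≤ ∑ x ∈ ({i, j} : Finset (Fin 3)), u x := by
              rw [Finset.sum_pair hij, huj]; omega
        _ ≤ ∑ x ∈ u.support, u x := Finset.sum_le_sum_of_subset hsub
        _ = u.degree := rfl
    omega

lemma aux_linear_rep {F : MvPolynomial (Fin 3) k} (hF : F.IsHomogeneous 1) :
    F = ∑ i : Fin 3, C (coeff (Finsupp.single i 1) F) * X i := by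
  apply MvPolynomial.ext
  intro u
  rw [coeff_sum]
  simp only [coeff_C_mul, coeff_X']
  by_cases hu : ∃ j, u = Finsupp.single j 1
  · obtain ⟨j, rfl⟩ := hu
    rw [Finset.sum_eq_single j]
    · simp
    · intro b _ hbj
      rw [if_neg, mul_zero]
      intro heq
      exact hbj (Finsupp.single_left_injective one_ne_zero heq)
    · simp
  · have h1 : coeff u F = 0 := by
      apply hF.coeff_eq_zero
      intro hdeg
      exact hu (aux_single_of_degree_one hdeg)
    rw [h1]
    apply (Finset.sum_eq_zero fun i _ => ?_).symm
    rw [if_neg, mul_zero]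
    intro heq
    exact hu ⟨i, heq.symm⟩

lemma aux_prime_X (j : Fin 3) : Prime (X j : MvPolynomial (Fin 3) k) := by
  have h0 : Prime (X 0 : MvPolynomial (Fin 3) k) := by
    rw [← MulEquiv.prime_iff (finSuccEquiv k 2).toMulEquiv]
    have h : (finSuccEquiv k 2).toMulEquiv (X 0) = Polynomial.X := finSuccEquiv_X_zero
    rw [h]
    exact Polynomial.prime_X
  rw [← MulEquiv.prime_iff (renameEquiv k (Equiv.swap (0 : Fin 3) j)).toMulEquiv] at h0
  have h : (renameEquiv k (Equiv.swap (0 : Fin 3) j)).toMulEquiv (X 0) = X j := by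
    simp [renameEquiv_apply, rename_X]
  rwa [h] at h0

lemma aux_prime_linear {F : MvPolynomial (Fin 3) k} (hF : F.IsHomogeneous 1)
    (hF0 : F ≠ 0) : Prime F := by
  classical
  set c : Fin 3 → k := fun i => coeff (Finsupp.single i 1) F with hc
  have hrep : F = ∑ i : Fin 3, C (c i) * X i := aux_linear_rep hF
  have hex : ∃ j, c j ≠ 0 := by
    by_contra hall
    push_neg at hall
    apply hF0
    rw [hrep]
    simp [hall]
  obtain ⟨j, hj⟩ := hex
  set R : MvPolynomial (Fin 3) k :=
    ∑ i ∈ Finset.univ.erase j, C ((c j)⁻¹ * c i) * X i with hR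
  have hscaled : (c j)⁻¹ • F = X j + R := by
    rw [hrep, Finset.smul_sum]
    rw [← Finset.add_sum_erase _ _ (Finset.mem_univ j)]
    congr 1
    · rw [smul_eq_C_mul, ← mul_assoc, ← C_mul, inv_mul_cancel₀ hj]
      simp
    · rw [hR]
      exact Finset.sum_congr rfl fun i _ => by rw [smul_eq_C_mul, ← mul_assoc, ← C_mul]
  set ψf : Fin 3 → MvPolynomial (Fin 3) k := fun i => if i = j then X j + R else X i with hψ
  set χf : Fin 3 → MvPolynomial (Fin 3) k := fun i => if i = j then X j - R else X i with hχ
  have haevalR : ∀ g : Fin 3 → MvPolynomial (Fin 3) k,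
      (∀ i, i ≠ j → g i = X i) → aeval g R = R := by
    intro g hg
    rw [hR, map_sum]
    refine Finset.sum_congr rfl fun i hi => ?_
    have hij : i ≠ j := (Finset.mem_erase.mp hi).1
    rw [map_mul, aeval_C, aeval_X, hg i hij]
    rfl
  have hψR : aeval ψf R = R := haevalR ψf fun i hi => by simp [hψ, hi]
  have hχR : aeval χf R = R := haevalR χf fun i hi => by simp [hχ, hi]
  have h1 : (aeval ψf).comp (aeval χf) = AlgHom.id k (MvPolynomial (Fin 3) k) := by
    apply MvPolynomial.algHom_ext
    intro i
    simp only [AlgHom.comp_apply, aeval_X, AlgHom.id_apply]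
    rcases eq_or_ne i j with rfl | hij
    · simp only [hχ, if_pos rfl, map_sub, aeval_X, hψR, hψ, if_pos rfl]
      rw [if_pos trivial]; rw [← hψ, hψR]; ring
    · simp [hχ, hψ, hij]
  have h2 : (aeval χf).comp (aeval ψf) = AlgHom.id k (MvPolynomial (Fin 3) k) := by
    apply MvPolynomial.algHom_ext
    intro i
    simp only [AlgHom.comp_apply, aeval_X, AlgHom.id_apply]
    rcases eq_or_ne i j with rfl | hij
    · simp only [hψ, if_pos rfl, map_add, aeval_X, hχR, hχ, if_pos rfl]
      rw [if_pos trivial]; rw [← hχ, hχR]; ring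
    · simp [hχ, hψ, hij]
  set e : MvPolynomial (Fin 3) k ≃ₐ[k] MvPolynomial (Fin 3) k :=
    AlgEquiv.ofAlgHom (aeval χf) (aeval ψf) h2 h1 with he
  have hF' : F = (c j) • (X j + R) := by
    rw [← hscaled, smul_smul, mul_inv_cancel₀ hj, one_smul]
  have heF : e F = C (c j) * X j := by
    show aeval χf F = _
    rw [hF', map_smul, map_add, aeval_X, hχR]
    simp only [hχ, if_pos rfl]
    rw [smul_eq_C_mul]
    ring
  rw [← MulEquiv.prime_iff e.toMulEquiv]
  have h : e.toMulEquiv F = C (c j) * X j := heF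
  rw [h]
  exact ((associated_unit_mul_left (X j) (C (c j)) ((isUnit_iff_ne_zero.mpr hj).map C)).symm).prime
    (aux_prime_X j)

lemma aux_aeval_eq_eval (p : Fin 3 → k) (q : MvPolynomial (Fin 3) k) :
    aeval p q = eval p q := rfl

lemma aux_aeval_homog_smul {φ : MvPolynomial (Fin 3) k} {n : ℕ}
    (hφ : φ.IsHomogeneous n) (cc : k) (p : Fin 3 → k) :
    aeval (cc • p) φ = cc ^ n * aeval p φ := by
  rw [aux_aeval_eq_eval, aux_aeval_eq_eval, eval_eq, eval_eq, Finset.mul_sum]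
  refine Finset.sum_congr rfl fun u hu => ?_
  have hdeg : u.degree = n := by
    by_contra hne
    exact (mem_support_iff.mp hu) (hφ.coeff_eq_zero hne)
  have h : ∏ i ∈ u.support, (cc • p) i ^ u i
      = cc ^ n * ∏ i ∈ u.support, p i ^ u i := by
    have h1 : ∀ i ∈ u.support, (cc • p) i ^ u i = cc ^ u i * p i ^ u i := by
      intro i _
      simp [Pi.smul_apply, smul_eq_mul, mul_pow]
    rw [Finset.prod_congr rfl h1, Finset.prod_mul_distrib,
      Finset.prod_pow_eq_pow_sum]
    rw [show ∑ i ∈ u.support, u i = n from hdeg]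
  rw [h]
  ring

lemma aux_mem_pointsIdeal_iff {X₂ : Finset (Fin 3 → k)} {z : MvPolynomial (Fin 3) k} :
    z ∈ pointsIdeal k X₂ ↔ ∀ p ∈ X₂, ∀ c : k, aeval (c • p) z = 0 := by
  simp only [pointsIdeal, Ideal.mem_iInf, RingHom.mem_ker, AlgHom.toRingHom_eq_coe,
    RingHom.coe_coe]

lemma aux_hc_mem_pointsIdeal [Infinite k] {X₂ : Finset (Fin 3 → k)}
    {z : MvPolynomial (Fin 3) k} (hz : z ∈ pointsIdeal k X₂) (d : ℕ) :
    homogeneousComponent d z ∈ pointsIdeal k X₂ := by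
  rw [aux_mem_pointsIdeal_iff] at hz ⊢
  intro p hp c
  have hkey : ∀ e : ℕ, aeval p (homogeneousComponent e z) = 0 := by
    set N := z.totalDegree with hN
    set P : Polynomial k :=
      ∑ e ∈ Finset.range (N + 1),
        Polynomial.C (aeval p (homogeneousComponent e z)) * Polynomial.X ^ e with hP
    have hPeval : ∀ c : k, P.eval c = 0 := by
      intro c
      have hz' := hz p hp c
      have hdecomp : aeval (c • p) z
          = ∑ e ∈ Finset.range (N + 1), c ^ e * aeval p (homogeneousComponent e z) := by
        conv_lhs => rw [← sum_homogeneousComponent z]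
        rw [map_sum]
        exact Finset.sum_congr rfl fun e _ =>
          aux_aeval_homog_smul (homogeneousComponent_isHomogeneous e z) c p
      rw [hP, Polynomial.eval_finset_sum]
      simp only [Polynomial.eval_mul, Polynomial.eval_C, Polynomial.eval_pow,
        Polynomial.eval_X]
      rw [← hz', hdecomp]
      exact Finset.sum_congr rfl fun e _ => by ring
    have hP0 : P = 0 := by
      apply Polynomial.funext
      intro r
      rw [hPeval r, Polynomial.eval_zero]
    intro e
    rcases le_or_gt e N with he | he
    · have h := congrArg (fun q => Polynomial.coeff q e) hP0
      simp only [hP, Polynomial.finset_sum_coeff, Polynomial.coeff_C_mul,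
        Polynomial.coeff_X_pow, Polynomial.coeff_zero, mul_ite, mul_one, mul_zero] at h
      rwa [Finset.sum_ite_eq (Finset.range (N+1)) e, if_pos (Finset.mem_range.mpr (by omega))]
        at h
    · rw [homogeneousComponent_eq_zero _ _ he, map_zero]
  rw [aux_aeval_homog_smul (homogeneousComponent_isHomogeneous d z) c p, hkey d, mul_zero]

lemma aux_mem_pieceI {I : Ideal (MvPolynomial (Fin 3) k)} {t : ℕ} {f : MvPolynomial (Fin 3) k} :
    f ∈ pieceI k I t ↔ f.IsHomogeneous t ∧ f ∈ I := by
  rw [pieceI, Submodule.mem_inf, Submodule.restrictScalars_mem, mem_homogeneousSubmodule]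

lemma aux_hc_mul {d n : ℕ} {g q : MvPolynomial (Fin 3) k} (hg : g.IsHomogeneous d) :
    homogeneousComponent (d + n) (g * q) = g * homogeneousComponent n q := by
  conv_lhs => rw [q.as_sum]
  conv_rhs => rw [q.as_sum]
  rw [Finset.mul_sum, map_sum, map_sum, Finset.mul_sum]
  refine Finset.sum_congr rfl fun u hu => ?_
  have h1 : g * monomial u (coeff u q) ∈ homogeneousSubmodule (Fin 3) k (d + u.degree) :=
    (mem_homogeneousSubmodule _ _).mpr (hg.mul (isHomogeneous_monomial _ rfl))
  have h2 : monomial u (coeff u q) ∈ homogeneousSubmodule (Fin 3) k u.degree :=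
    (mem_homogeneousSubmodule _ _).mpr (isHomogeneous_monomial _ rfl)
  rw [homogeneousComponent_of_mem h1, homogeneousComponent_of_mem h2, mul_ite, mul_zero]
  congr 1
  simp [Nat.add_left_cancel_iff, eq_iff_iff]

lemma aux_mulImgI_le {I : Ideal (MvPolynomial (Fin 3) k)} {s t : ℕ} (h : t = 1 + s) :
    mulImgI k I s ≤ pieceI k I t := by
  rw [mulImgI, Submodule.span_le]
  rintro x ⟨L, hL, P, hP, rfl⟩
  rw [SetLike.mem_coe, aux_mem_pieceI]
  rw [aux_mem_pieceI] at hP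
  exact ⟨h ▸ ((mem_homogeneousSubmodule _ _).mp hL).mul hP.1, Ideal.mul_mem_left _ _ hP.2⟩

lemma aux_extract {X₂ : Finset (Fin 3 → k)} [Infinite k] {l s : ℕ} (hls : l ≤ 1 + s)
    {F G' f : MvPolynomial (Fin 3) k}
    (hF : F.IsHomogeneous 1) (hG : G'.IsHomogeneous l)
    (hf : f ∈ pieceI k (Ideal.span {F} * pointsIdeal k X₂ + Ideal.span {G'}) (1 + s)) :
    ∃ q ∈ pieceI k (pointsIdeal k X₂) s,
      ∃ h ∈ homogeneousSubmodule (Fin 3) k (1 + s - l), f = F * q + h * G' := by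
  rw [aux_mem_pieceI] at hf
  obtain ⟨hfh, hfJ⟩ := hf
  rw [Ideal.add_eq_sup, Submodule.mem_sup] at hfJ
  obtain ⟨A, hA, B, hB, hAB⟩ := hfJ
  rw [Ideal.mem_span_singleton_mul] at hA
  obtain ⟨z, hz, rfl⟩ := hA
  rw [Ideal.mem_span_singleton'] at hB
  obtain ⟨a, rfl⟩ := hB
  have hfc : f = homogeneousComponent (1 + s) f := by
    rw [homogeneousComponent_of_mem ((mem_homogeneousSubmodule _ _).mpr hfh), if_pos rfl]
  rw [← hAB, map_add] at hfc
  have e1 : homogeneousComponent (1 + s) (F * z) = F * homogeneousComponent s z :=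
    aux_hc_mul hF
  have e2 : homogeneousComponent (1 + s) (a * G')
      = G' * homogeneousComponent (1 + s - l) a := by
    rw [mul_comm a G']
    have h := aux_hc_mul (n := 1 + s - l) (q := a) hG
    rwa [show l + (1 + s - l) = 1 + s by omega] at h
  refine ⟨homogeneousComponent s z, ?_, homogeneousComponent (1 + s - l) a, ?_, ?_⟩
  · exact aux_mem_pieceI.mpr ⟨homogeneousComponent_isHomogeneous s z,
      aux_hc_mem_pointsIdeal hz s⟩
  · exact homogeneousComponent_mem _ _
  · rw [← hAB, hfc, e1, e2, mul_comm G' _]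

instance aux_fd (t : ℕ) : FiniteDimensional k (homogeneousSubmodule (Fin 3) k t) := by
  apply Submodule.finiteDimensional_of_le (S₂ := restrictTotalDegree (Fin 3) k t)
  intro f hf
  rw [mem_restrictTotalDegree]
  exact ((mem_homogeneousSubmodule _ _).mp hf).totalDegree_le

lemma aux_fd_pieceI {I : Ideal (MvPolynomial (Fin 3) k)} (t : ℕ) :
    FiniteDimensional k (pieceI k I t) :=
  Submodule.finiteDimensional_of_le (inf_le_left : pieceI k I t ≤ _)

lemma aux_pointsIdeal_empty : pointsIdeal k (∅ : Finset (Fin 3 → k)) = ⊤ := by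
  simp [pointsIdeal]

lemma aux_top_piece (t : ℕ) : pieceI k (⊤ : Ideal (MvPolynomial (Fin 3) k)) t
    = homogeneousSubmodule (Fin 3) k t := by
  rw [pieceI]
  simp

lemma aux_mulImg_top {l : ℕ} (hl : 1 ≤ l) :
    mulImgI k (⊤ : Ideal (MvPolynomial (Fin 3) k)) (l - 1)
      = homogeneousSubmodule (Fin 3) k l := by
  apply le_antisymm
  · rw [mulImgI, Submodule.span_le]
    rintro x ⟨L, hL, P, hP, rfl⟩
    rw [aux_mem_pieceI] at hP
    rw [SetLike.mem_coe, mem_homogeneousSubmodule]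
    have h := ((mem_homogeneousSubmodule _ _).mp hL).mul hP.1
    rwa [show 1 + (l - 1) = l by omega] at h
  · intro f hf
    have hfh := (mem_homogeneousSubmodule _ _).mp hf
    rw [f.as_sum]
    apply Submodule.sum_mem
    intro u hu
    have hud : u.degree = l := by
      by_contra hne
      exact (mem_support_iff.mp hu) (hfh.coeff_eq_zero hne)
    have hu0 : u ≠ 0 := by
      intro h0
      rw [h0] at hud
      simp at hud
      omega
    obtain ⟨i, hi⟩ := Finsupp.ne_iff.mp hu0
    simp only [Finsupp.coe_zero, Pi.zero_apply] at hi
    have hle : Finsupp.single i 1 ≤ u := Finsupp.single_le_iff.mpr (by omega)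
    set v := u - Finsupp.single i 1 with hv
    have huv : v + Finsupp.single i 1 = u := tsub_add_cancel_of_le hle
    have hvd : v.degree = l - 1 := by
      have h := aux_degree_add v (Finsupp.single i 1)
      rw [huv, aux_degree_single, hud] at h
      omega
    apply Submodule.subset_span
    refine ⟨X i, (mem_homogeneousSubmodule _ _).mpr (isHomogeneous_X _ _),
      monomial v (coeff u f), ?_, ?_⟩
    · rw [aux_mem_pieceI]
      exact ⟨isHomogeneous_monomial _ hvd, Submodule.mem_top⟩
    · rw [X, monomial_mul, one_mul, add_comm]
      rw [huv]


variable (k)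

/-- Claim 5.4.  Let `X₂` be a set of points whose ideal has exactly one
minimal generator in degree `l`, the maximal degree of a minimal generator; let `F` be a
linear form vanishing at no point of `X₂`, `G' ∈ I(X₂)_l` with `F, G'` a regular sequence
(`F ∤ G'`), and let `Z` be the liaison addition with `I(Z) = F·I(X₂) + (G')`.  Then
`I(Z)` has a minimal generator in degree `l+1` iff `G'` is not a minimal generator of
`I(X₂)`, i.e. iff `G' ∈ S₁·I(X₂)_{l−1}`. -/
theorem liaison_addition_generator_criterion [IsAlgClosed k] (l : ℕ) (hl : 1 ≤ l)
    (X₂ : Finset (Fin 3 → k))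
    (hX0 : ∀ p ∈ X₂, p ≠ 0)
    (hXdist : ∀ p ∈ X₂, ∀ q ∈ X₂, p ≠ q → ∀ c : k, p ≠ c • q)
    (honegen : Module.finrank k (pieceI k (pointsIdeal k X₂) l) =
      Module.finrank k (mulImgI k (pointsIdeal k X₂) (l - 1)) + 1)
    (hmaxdeg : ∀ m, l ≤ m →
      mulImgI k (pointsIdeal k X₂) m = pieceI k (pointsIdeal k X₂) (m + 1))
    (F : MvPolynomial (Fin 3) k)
    (hF : F ∈ homogeneousSubmodule (Fin 3) k 1)
    (hFX : ∀ p ∈ X₂, aeval p F ≠ 0)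
    (G' : MvPolynomial (Fin 3) k)
    (hG' : G' ∈ pieceI k (pointsIdeal k X₂) l)
    (hreg : ¬ F ∣ G') :
    pieceI k (Ideal.span {F} * pointsIdeal k X₂ + Ideal.span {G'}) (l + 1) ≠
        mulImgI k (Ideal.span {F} * pointsIdeal k X₂ + Ideal.span {G'}) l ↔
      G' ∈ mulImgI k (pointsIdeal k X₂) (l - 1) := by
  classical
  have hX2ne : X₂.Nonempty := by
    rcases Finset.eq_empty_or_nonempty X₂ with rfl | h
    · rw [aux_pointsIdeal_empty, aux_top_piece, aux_mulImg_top hl] at honegen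
      omega
    · exact h
  set J : Ideal (MvPolynomial (Fin 3) k) :=
    Ideal.span {F} * pointsIdeal k X₂ + Ideal.span {G'} with hJdef
  set M := mulImgI k (pointsIdeal k X₂) (l - 1) with hMdef
  obtain ⟨p₀, hp₀⟩ := hX2ne
  have hF0 : F ≠ 0 := fun h => hFX p₀ hp₀ (by rw [h, map_zero])
  have hFh : F.IsHomogeneous 1 := (mem_homogeneousSubmodule _ _).mp hF
  obtain ⟨hG'h, hG'I⟩ := aux_mem_pieceI.mp hG'
  have hFprime : Prime F := aux_prime_linear hFh hF0
  have hMle : M ≤ pieceI k (pointsIdeal k X₂) l := aux_mulImgI_le (by omega)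
  have hG'J : G' ∈ J := Submodule.mem_sup_right (Ideal.subset_span rfl)
  have hG'pieceJ : G' ∈ pieceI k J l := aux_mem_pieceI.mpr ⟨hG'h, hG'J⟩
  by_cases hcase : G' ∈ M
  · -- G' is not a minimal generator: there IS a new generator in degree l+1
    refine ⟨fun _ => hcase, fun _ => ?_⟩
    have hne : M ≠ pieceI k (pointsIdeal k X₂) l := by
      intro h; rw [h] at honegen; omega
    obtain ⟨H, hHmem, hHnot⟩ := SetLike.exists_of_lt (lt_of_le_of_ne hMle hne)
    obtain ⟨hHh, hHI⟩ := aux_mem_pieceI.mp hHmem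
    intro heq
    have h1 : F * H ∈ pieceI k J (l + 1) := by
      rw [aux_mem_pieceI]
      constructor
      · have h := hFh.mul hHh; rwa [show 1 + l = l + 1 by omega] at h
      · exact Submodule.mem_sup_left (Ideal.mem_span_singleton_mul.mpr ⟨H, hHI, rfl⟩)
    rw [heq] at h1
    set T := Submodule.map (LinearMap.mulLeft k F) M ⊔
      Submodule.map (LinearMap.mulLeft k G') (homogeneousSubmodule (Fin 3) k 1) with hT
    have hTle : mulImgI k J l ≤ T := by
      rw [mulImgI, Submodule.span_le]
      rintro x ⟨L, hL, P, hP, rfl⟩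
      rw [show l = 1 + (l - 1) by omega] at hP
      obtain ⟨q, hq, h, hh, rfl⟩ := aux_extract (by omega) hFh hG'h hP
      have hh0 : h.IsHomogeneous 0 := by
        have := (mem_homogeneousSubmodule _ _).mp hh
        rwa [show 1 + (l - 1) - l = 0 by omega] at this
      have hLh : L * (F * q + h * G') = F * (L * q) + G' * (L * h) := by ring
      rw [SetLike.mem_coe, hLh]
      apply Submodule.add_mem
      · apply Submodule.mem_sup_left
        exact ⟨L * q, Submodule.subset_span ⟨L, hL, q, hq, rfl⟩, rfl⟩
      · apply Submodule.mem_sup_right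
        refine ⟨L * h, ?_, rfl⟩
        rw [SetLike.mem_coe, mem_homogeneousSubmodule]
        exact ((mem_homogeneousSubmodule _ _).mp hL).mul hh0
    have h2 := hTle h1
    rw [hT, Submodule.mem_sup] at h2
    obtain ⟨x, hx, y, hy, hxy⟩ := h2
    obtain ⟨Q, hQ, rfl⟩ := Submodule.mem_map.mp hx
    obtain ⟨L₁, hL₁mem, rfl⟩ := Submodule.mem_map.mp hy
    simp only [LinearMap.mulLeft_apply] at hxy
    have hdvd : F ∣ L₁ * G' := ⟨H - Q, by linear_combination hxy⟩
    rcases (hFprime.2.2 L₁ G' hdvd) with hFL | hFG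
    swap
    · exact absurd hFG hreg
    obtain ⟨Mz, hMz⟩ := hFL
    have hL₁eq : L₁ = F * C (coeff 0 Mz) := by
      have e := aux_hc_mul (d := 1) (n := 0) (q := Mz) hFh
      rw [Nat.add_zero, ← hMz, homogeneousComponent_zero,
        homogeneousComponent_of_mem hL₁mem, if_pos rfl] at e
      exact e
    have hHQ : F * H = F * (Q + C (coeff 0 Mz) * G') := by
      rw [hL₁eq] at hxy
      linear_combination -hxy
    have hH : H = Q + C (coeff 0 Mz) * G' := mul_left_cancel₀ hF0 hHQ
    apply hHnot
    rw [hH]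
    refine Submodule.add_mem _ hQ ?_
    rw [← smul_eq_C_mul]
    exact Submodule.smul_mem _ _ hcase
  · -- G' is a minimal generator: NO new generator in degree l+1
    have heq : pieceI k J (l + 1) = mulImgI k J l := by
      apply le_antisymm
      · intro f hf
        rw [show l + 1 = 1 + l by omega] at hf
        obtain ⟨q, hq, h, hh, rfl⟩ := aux_extract (by omega) hFh hG'h hf
        have hh1 : h.IsHomogeneous 1 := by
          have := (mem_homogeneousSubmodule _ _).mp hh
          rwa [show 1 + l - l = 1 by omega] at this
        -- identify pieceI I l with M ⊔ span {G'}
        have hWle : M ⊔ Submodule.span k {G'} ≤ pieceI k (pointsIdeal k X₂) l := by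
          refine sup_le hMle ?_
          rwa [Submodule.span_singleton_le_iff_mem]
        have hWeq : M ⊔ Submodule.span k {G'} = pieceI k (pointsIdeal k X₂) l := by
          haveI := aux_fd_pieceI (I := pointsIdeal k X₂) (k := k) l
          haveI : FiniteDimensional k (M ⊔ Submodule.span k {G'} :
              Submodule k (MvPolynomial (Fin 3) k)) :=
            Submodule.finiteDimensional_of_le hWle
          apply Submodule.eq_of_le_of_finrank_eq hWle
          have hlt : M < M ⊔ Submodule.span k {G'} := by
            refine lt_of_le_of_ne le_sup_left fun hEq => hcase ?_
            rw [hEq]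
            exact Submodule.mem_sup_right (Submodule.mem_span_singleton_self G')
          have hr1 : Module.finrank k M
              < Module.finrank k (M ⊔ Submodule.span k {G'} :
                Submodule k (MvPolynomial (Fin 3) k)) :=
            Submodule.finrank_lt_finrank_of_lt hlt
          have hr2 : Module.finrank k (M ⊔ Submodule.span k {G'} :
                Submodule k (MvPolynomial (Fin 3) k))
              ≤ Module.finrank k (pieceI k (pointsIdeal k X₂) l) :=
            Submodule.finrank_mono hWle
          omega
        rw [← hWeq, Submodule.mem_sup] at hq
        obtain ⟨Q, hQ, y, hy, rfl⟩ := hq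
        obtain ⟨cc, rfl⟩ := Submodule.mem_span_singleton.mp hy
        have hsplit : F * (Q + cc • G') + h * G' = F * Q + (cc • F + h) * G' := by
          rw [smul_eq_C_mul, smul_eq_C_mul]; ring
        rw [hsplit]
        apply Submodule.add_mem
        · -- F * Q ∈ mulImgI J l
          have hFmul : ∀ x, x ∈ M → F * x ∈ mulImgI k J l := by
            intro x hx
            refine Submodule.span_induction ?_ ?_ ?_ ?_ hx
            · rintro y ⟨L, hL, R', hR', rfl⟩
              obtain ⟨hR'h, hR'I⟩ := aux_mem_pieceI.mp hR'
              have hFR' : F * R' ∈ pieceI k J l := by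
                rw [aux_mem_pieceI]
                constructor
                · have hmul := hFh.mul hR'h
                  rwa [show 1 + (l - 1) = l by omega] at hmul
                · exact Submodule.mem_sup_left
                    (Ideal.mem_span_singleton_mul.mpr ⟨R', hR'I, rfl⟩)
              have : F * (L * R') = L * (F * R') := by ring
              rw [this]
              exact Submodule.subset_span ⟨L, hL, F * R', hFR', rfl⟩
            · rw [mul_zero]; exact Submodule.zero_mem _
            · intro a b _ _ ha hb
              rw [mul_add]; exact Submodule.add_mem _ ha hb
            · intro r a _ ha
              rw [mul_smul_comm]; exact Submodule.smul_mem _ _ ha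
          exact hFmul Q hQ
        · apply Submodule.subset_span
          refine ⟨cc • F + h, ?_, G', hG'pieceJ, rfl⟩
          exact Submodule.add_mem _ (Submodule.smul_mem _ _ hF) hh1
      · exact aux_mulImgI_le (show l + 1 = 1 + l by omega)
    exact ⟨fun hne => absurd heq hne, fun hmem => absurd hmem hcase⟩

end
end
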